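/- Let a, b, c, d, e, f be integers with a, e, f nonzero, and let n and m be positive integers. Define G(x) = a(ex + c)^n + b and H(y) = a(fy + d)^m + b. Then the equation G(x) = H(y) has infinitely many rational solutions with a bounded denominator; more precisely, for every integer t, the pair x = (t^m − c)/e, y = (t^n − d)/f is a rational solution of G(x) = H(y) whose denominators divide e·f, and these pairs form an infinite set. -/

import Mathlib

open Polynomial

def HasInfManyBddDenomSols (f g : Polynomial ℚ) : Prop :=
  ∃ z : ℤ, 0 < z ∧
    {p : ℚ × ℚ | f.eval p.1 = g.eval p.2 ∧ (∃ x' : ℤ, (z : ℚ) * p.1 = (x' : ℚ)) ∧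
      (∃ y' : ℤ, (z : ℚ) * p.2 = (y' : ℚ))}.Infinite

/-- For integers `a, b, c, d, e, f` with `a, e, f ≠ 0` and positive integers `n, m`,
with `G(x) = a(ex+c)^n + b` and `H(y) = a(fy+d)^m + b`, the equation `G(x) = H(y)`
has infinitely many rational solutions with a bounded denominator: for every `t ∈ ℤ`
the pair `x = (t^m - c)/e`, `y = (t^n - d)/f` is a solution whose denominators divide
`e·f`, and these pairs form an infinite set. -/
theorem stmt4 (a b c d e f : ℤ) (ha : a ≠ 0) (he : e ≠ 0) (hf : f ≠ 0)
    (n m : ℕ) (hn : 1 ≤ n) (hm : 1 ≤ m)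
    (G H : Polynomial ℚ)
    (hG : G = C (a : ℚ) * (C (e : ℚ) * X + C (c : ℚ)) ^ n + C (b : ℚ))
    (hH : H = C (a : ℚ) * (C (f : ℚ) * X + C (d : ℚ)) ^ m + C (b : ℚ)) :
    (∀ t : ℤ,
        G.eval (((t : ℚ) ^ m - (c : ℚ)) / (e : ℚ)) =
          H.eval (((t : ℚ) ^ n - (d : ℚ)) / (f : ℚ)) ∧
        (∃ u : ℤ, ((e * f : ℤ) : ℚ) * (((t : ℚ) ^ m - (c : ℚ)) / (e : ℚ)) = (u : ℚ)) ∧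
        (∃ v : ℤ, ((e * f : ℤ) : ℚ) * (((t : ℚ) ^ n - (d : ℚ)) / (f : ℚ)) = (v : ℚ))) ∧
      {p : ℚ × ℚ | ∃ t : ℤ,
        p = (((t : ℚ) ^ m - (c : ℚ)) / (e : ℚ), ((t : ℚ) ^ n - (d : ℚ)) / (f : ℚ))}.Infinite ∧
      HasInfManyBddDenomSols G H := by
  have he' : (e : ℚ) ≠ 0 := Int.cast_ne_zero.mpr he
  have hf' : (f : ℚ) ≠ 0 := Int.cast_ne_zero.mpr hf
  have hGe : ∀ t : ℤ, G.eval (((t : ℚ) ^ m - (c : ℚ)) / (e : ℚ)) = a * (t:ℚ)^(m*n) + b := by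
    intro t
    have h1 : (e:ℚ) * (((t:ℚ)^m - c)/e) + c = (t:ℚ)^m := by field_simp; ring
    simp only [hG, eval_add, eval_mul, eval_pow, eval_C, eval_X, h1, ← pow_mul]
  have hHe : ∀ t : ℤ, H.eval (((t : ℚ) ^ n - (d : ℚ)) / (f : ℚ)) = a * (t:ℚ)^(n*m) + b := by
    intro t
    have h1 : (f:ℚ) * (((t:ℚ)^n - d)/f) + d = (t:ℚ)^n := by field_simp; ring
    simp only [hH, eval_add, eval_mul, eval_pow, eval_C, eval_X, h1, ← pow_mul]
  have main : ∀ t : ℤ,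
      G.eval (((t : ℚ) ^ m - (c : ℚ)) / (e : ℚ)) =
        H.eval (((t : ℚ) ^ n - (d : ℚ)) / (f : ℚ)) ∧
      (∃ u : ℤ, ((e * f : ℤ) : ℚ) * (((t : ℚ) ^ m - (c : ℚ)) / (e : ℚ)) = (u : ℚ)) ∧
      (∃ v : ℤ, ((e * f : ℤ) : ℚ) * (((t : ℚ) ^ n - (d : ℚ)) / (f : ℚ)) = (v : ℚ)) := by
    intro t
    refine ⟨by rw [hGe t, hHe t, mul_comm m n], ⟨f * t^m - f*c, ?_⟩, ⟨e * t^n - e*d, ?_⟩⟩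
    · push_cast; field_simp
    · push_cast; field_simp
  have hinj : Function.Injective (fun k : ℕ =>
      ((((k:ℤ):ℚ)^m - (c:ℚ))/(e:ℚ), (((k:ℤ):ℚ)^n - (d:ℚ))/(f:ℚ))) := by
    intro k l hkl
    have h1 : (((k:ℤ):ℚ)^m - c)/e = (((l:ℤ):ℚ)^m - c)/e := congrArg Prod.fst hkl
    field_simp at h1
    have h2 : ((k:ℚ))^m = (l:ℚ)^m := by push_cast at h1; linarith
    have := (pow_left_inj₀ (Nat.cast_nonneg k) (Nat.cast_nonneg l) (by omega : m ≠ 0)).mp h2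
    exact_mod_cast this
  have hParamInf : {p : ℚ × ℚ | ∃ t : ℤ,
      p = (((t : ℚ) ^ m - (c : ℚ)) / (e : ℚ), ((t : ℚ) ^ n - (d : ℚ)) / (f : ℚ))}.Infinite := by
    apply Set.infinite_of_injective_forall_mem hinj
    intro k
    exact ⟨(k : ℤ), rfl⟩
  refine ⟨main, hParamInf, |e * f|, abs_pos.mpr (mul_ne_zero he hf), ?_⟩
  apply hParamInf.mono
  rintro p ⟨t, rfl⟩
  obtain ⟨heq, ⟨u, hu⟩, ⟨v, hv⟩⟩ := main t
  refine ⟨heq, ?_, ?_⟩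
  · rcases abs_choice (e * f) with h | h
    · exact ⟨u, by rw [h]; exact hu⟩
    · exact ⟨-u, by rw [h]; push_cast at hu ⊢; linarith⟩
  · rcases abs_choice (e * f) with h | h
    · exact ⟨v, by rw [h]; exact hv⟩
    · exact ⟨-v, by rw [h]; push_cast at hv ⊢; linarith⟩
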